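/- arXiv:2003.00362 — 4 statements merged into one kernel-verified Lean document; each statement's English description precedes it below -/
import Mathlib

section
/- Let U be a recursive max-linear vector with propagating noise: U = (U ⊙ C ∨ Z) ⊙ E_d, where E_d is the diagonal matrix with entries ε_1,…,ε_d ≥ 1. Then U = Z ⊙ B̄, where B̄ = E_d ⊙ (I_d ∨ C̄)^{⊙(d-1)} and C̄ = C ⊙ E_d, and this solution is unique. -/
open Matrix Finset MeasureTheory ProbabilityTheory Filter

noncomputable section

/-- Max-times (tropical) matrix product: `(F ⊙ G) i j = ⋁ k, F i k * G k j`. -/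
def mOdot {m n p : ℕ} (F : Matrix (Fin m) (Fin n) NNReal) (G : Matrix (Fin n) (Fin p) NNReal) :
    Matrix (Fin m) (Fin p) NNReal :=
  Matrix.of fun i j => Finset.univ.sup fun k => F i k * G k j

/-- Entrywise maximum of two matrices. -/
def mSup {m n : ℕ} (A B : Matrix (Fin m) (Fin n) NNReal) : Matrix (Fin m) (Fin n) NNReal :=
  Matrix.of fun i j => A i j ⊔ B i j

/-- Max-times power: `A^{⊙0} = I`, `A^{⊙(k+1)} = A^{⊙k} ⊙ A`. -/
def mPow {d : ℕ} (A : Matrix (Fin d) (Fin d) NNReal) : ℕ → Matrix (Fin d) (Fin d) NNReal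
  | 0 => 1
  | k + 1 => mOdot (mPow A k) A

/-- Kleene star: `B = ⋁_{k=0}^{d-1} C^{⊙k}`. -/
def kleene {d : ℕ} (C : Matrix (Fin d) (Fin d) NNReal) : Matrix (Fin d) (Fin d) NNReal :=
  Matrix.of fun i j => (Finset.range d).sup fun k => mPow C k i j

/-- `IsWalk C i j l` : `l` is the list of vertices after `i` of a walk from `i` to `j`
    along positive entries of `C`. -/
def IsWalk {d : ℕ} (C : Matrix (Fin d) (Fin d) NNReal) : Fin d → Fin d → List (Fin d) → Prop
  | i, j, [] => i = j
  | i, j, k :: l => 0 < C i k ∧ IsWalk C k j l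

/-- Deterministic path weight: product of edge weights along a walk. -/
def walkWeight {d : ℕ} (C : Matrix (Fin d) (Fin d) NNReal) : Fin d → List (Fin d) → NNReal
  | _, [] => 1
  | i, k :: l => C i k * walkWeight C k l

/-- Acyclicity: the only walk from a vertex to itself is the empty one. -/
def Acyclic {d : ℕ} (C : Matrix (Fin d) (Fin d) NNReal) : Prop :=
  ∀ i l, IsWalk C i i l → l = []

/-- Non-noisy ML coefficient: maximal deterministic path weight from `j` to `i`
    (`1` on the diagonal; `0` if there is no path). -/
def detB {d : ℕ} (C : Matrix (Fin d) (Fin d) NNReal) (j i : Fin d) : NNReal :=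
  sSup {w | ∃ l, IsWalk C j i l ∧ w = walkWeight C j l}

/-- Noisy path weight (without the initial noise factor `ε j`):
    `∏_l c_{k_l k_{l+1}} ε_{k_{l+1}}` along a walk. -/
def noisyWeight {d : ℕ} (C : Matrix (Fin d) (Fin d) NNReal) (ε : Fin d → NNReal) :
    Fin d → List (Fin d) → NNReal
  | _, [] => 1
  | i, k :: l => C i k * ε k * noisyWeight C ε k l

/-- Random (noisy) ML coefficient `b̄_{ji}`: maximal random path weight
    `d̄_{ji}(p) = ε_j ∏ c ε` from `j` to `i`; equals `ε j` on the diagonal,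
    `0` if `j` is not an ancestor of `i`. -/
def barB {d : ℕ} (C : Matrix (Fin d) (Fin d) NNReal) (ε : Fin d → NNReal) (j i : Fin d) :
    NNReal :=
  sSup {w | ∃ l, IsWalk C j i l ∧ w = ε j * noisyWeight C ε j l}

/-- `j` is a strict ancestor of `i` (there exists a nonempty path). -/
def Reach {d : ℕ} (C : Matrix (Fin d) (Fin d) NNReal) (j i : Fin d) : Prop :=
  ∃ l, l ≠ [] ∧ IsWalk C j i l

/-- Max-times product of a row vector with a matrix. -/
def vOdot {d : ℕ} (x : Fin d → NNReal) (A : Matrix (Fin d) (Fin d) NNReal) : Fin d → NNReal :=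
  fun j => Finset.univ.sup fun k => x k * A k j

/-- Componentwise maximum of two vectors. -/
def vSup {d : ℕ} (x y : Fin d → NNReal) : Fin d → NNReal := fun i => x i ⊔ y i

/-- Maximum of `f k` over all `k` satisfying `P` (0 if there is none). -/
def supOver {d : ℕ} (P : Fin d → Prop) (f : Fin d → NNReal) : NNReal :=
  sSup {w | ∃ k, P k ∧ w = f k}

end

/-!
With `M = C ⊙ E_d` and `v = Z ⊙ E_d` the equation reads `U = T U` for `T x = x ⊙ M ∨ v`, and
`T^[m+1] x = x ⊙ M^{⊙(m+1)} ∨ v ⊙ (I ∨ M)^{⊙m}`. Nilpotency of `C` passes to `M`, so `T^[d]` is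
the constant map with value `v ⊙ (I ∨ M)^{⊙(d-1)} = Z ⊙ B̄`, and a map with a constant iterate has
that constant as its unique fixed point.
-/

open Function

theorem Function.isFixedPt_iff_eq_of_iterate_eq_const {α : Type*} {f : α → α} {n : ℕ}
    {c : α} (h : ∀ x, f^[n] x = c) (x : α) : IsFixedPt f x ↔ x = c := by
  refine ⟨fun hx => (hx.iterate n).symm.trans (h x), ?_⟩
  rintro rfl
  calc f x = f (f^[n] x) := by rw [h]
    _ = f^[n] (f x) := (iterate_succ_apply' f n x).symm.trans (iterate_succ_apply f n x)
    _ = x := h _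

variable {d : ℕ}

theorem vOdot_vSup (x y : Fin d → NNReal) (A : Matrix (Fin d) (Fin d) NNReal) :
    vOdot (vSup x y) A = vSup (vOdot x A) (vOdot y A) := by
  funext j
  simp only [vOdot, vSup, NNReal.sup_mul]
  exact Finset.sup_sup (f := fun k => x k * A k j) (g := fun k => y k * A k j)

theorem vOdot_mSup (x : Fin d → NNReal) (A B : Matrix (Fin d) (Fin d) NNReal) :
    vOdot x (mSup A B) = vSup (vOdot x A) (vOdot x B) := by
  funext j
  simp only [vOdot, vSup, mSup, Matrix.of_apply, NNReal.mul_sup]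
  exact Finset.sup_sup (f := fun k => x k * A k j) (g := fun k => x k * B k j)

theorem mOdot_mSup {m n p : ℕ} (F : Matrix (Fin m) (Fin n) NNReal)
    (G H : Matrix (Fin n) (Fin p) NNReal) :
    mOdot F (mSup G H) = mSup (mOdot F G) (mOdot F H) := by
  refine Matrix.ext fun i j => ?_
  simp only [mOdot, mSup, Matrix.of_apply, NNReal.mul_sup]
  exact Finset.sup_sup (f := fun k => F i k * G k j) (g := fun k => F i k * H k j)

theorem vOdot_vOdot (x : Fin d → NNReal) (A B : Matrix (Fin d) (Fin d) NNReal) :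
    vOdot (vOdot x A) B = vOdot x (mOdot A B) := by
  funext j
  simp only [vOdot, mOdot, Matrix.of_apply, NNReal.finset_sup_mul, NNReal.mul_finset_sup, mul_assoc]
  exact Finset.sup_comm _ _ _

theorem vOdot_one (x : Fin d → NNReal) : vOdot x 1 = x := by
  funext j
  simp [vOdot, Matrix.one_apply, Finset.sup_ite, Finset.filter_eq']

theorem mOdot_one {m n : ℕ} (F : Matrix (Fin m) (Fin n) NNReal) : mOdot F 1 = F := by
  refine Matrix.ext fun i j => ?_
  simp [mOdot, Matrix.one_apply, Finset.sup_ite, Finset.filter_eq']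

theorem one_mOdot {m n : ℕ} (F : Matrix (Fin m) (Fin n) NNReal) : mOdot 1 F = F := by
  refine Matrix.ext fun i j => ?_
  simp [mOdot, Matrix.one_apply, Finset.sup_ite, Finset.filter_eq]

theorem mOdot_diagonal {m n : ℕ} (F : Matrix (Fin m) (Fin n) NNReal) (ε : Fin n → NNReal)
    (i : Fin m) (j : Fin n) : mOdot F (Matrix.diagonal ε) i j = F i j * ε j := by
  simp [mOdot, Matrix.diagonal_apply, Finset.sup_ite, Finset.filter_eq']

theorem vOdot_zero (x : Fin d → NNReal) : vOdot x 0 = 0 := by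
  funext j
  simp [vOdot]

theorem zero_vSup (x : Fin d → NNReal) : vSup 0 x = x := by
  funext j
  simp [vSup]

theorem vSup_assoc (x y z : Fin d → NNReal) : vSup (vSup x y) z = vSup x (vSup y z) := by
  funext j
  exact sup_assoc _ _ _

theorem vSup_comm (x y : Fin d → NNReal) : vSup x y = vSup y x := by
  funext j
  exact sup_comm _ _

theorem mPow_one (A : Matrix (Fin d) (Fin d) NNReal) : mPow A 1 = A :=
  one_mOdot A

theorem mPow_le_pow_mul_mPow {A B : Matrix (Fin d) (Fin d) NNReal} {K : NNReal}
    (h : ∀ i j, A i j ≤ K * B i j) (n : ℕ) (i j : Fin d) :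
    mPow A n i j ≤ K ^ n * mPow B n i j := by
  induction n generalizing j with
  | zero => simp [mPow]
  | succ n ih =>
    simp only [mPow, mOdot, Matrix.of_apply]
    refine Finset.sup_le fun k _ => ?_
    calc mPow A n i k * A k j ≤ K ^ n * mPow B n i k * (K * B k j) := mul_le_mul' (ih k) (h k j)
      _ = K ^ (n + 1) * (mPow B n i k * B k j) := by ring
      _ ≤ K ^ (n + 1) * mPow B (n + 1) i j :=
        mul_le_mul_right (Finset.le_sup (f := fun k => mPow B n i k * B k j) (mem_univ k)) _

theorem mPow_mOdot_diagonal_eq_zero {C : Matrix (Fin d) (Fin d) NNReal} {n : ℕ}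
    (hC : mPow C n = 0) (ε : Fin d → NNReal) : mPow (mOdot C (Matrix.diagonal ε)) n = 0 := by
  have hle : ∀ i j, mOdot C (Matrix.diagonal ε) i j ≤ univ.sup ε * C i j := fun i j => by
    rw [mOdot_diagonal, mul_comm]
    exact mul_le_mul_left (Finset.le_sup (mem_univ j)) _
  refine Matrix.ext fun i j => le_antisymm ?_ zero_le
  simpa [hC] using mPow_le_pow_mul_mPow hle n i j

theorem mPow_one_mSup_succ_eq_mSup (M : Matrix (Fin d) (Fin d) NNReal) (n : ℕ) :
    mPow (mSup 1 M) (n + 1) = mSup (mPow (mSup 1 M) n) (mOdot (mPow (mSup 1 M) n) M) := by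
  rw [mPow, mOdot_mSup, mOdot_one]

theorem mPow_one_mSup_le_succ (M : Matrix (Fin d) (Fin d) NNReal) (n : ℕ) (i j : Fin d) :
    mPow (mSup 1 M) n i j ≤ mPow (mSup 1 M) (n + 1) i j := by
  rw [mPow_one_mSup_succ_eq_mSup]
  exact le_sup_left

theorem mPow_one_mSup_succ (M : Matrix (Fin d) (Fin d) NNReal) (n : ℕ) :
    mPow (mSup 1 M) (n + 1) = mSup 1 (mOdot (mPow (mSup 1 M) n) M) := by
  induction n with
  | zero => rw [mPow_one_mSup_succ_eq_mSup, mPow, one_mOdot]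
  | succ n ih =>
    rw [mPow_one_mSup_succ_eq_mSup (n := n + 1)]
    nth_rw 1 [ih]
    refine Matrix.ext fun i j => ?_
    simp only [mSup, mOdot, Matrix.of_apply, sup_assoc]
    congr 1
    refine sup_eq_right.2 (Finset.sup_mono_fun fun k _ => ?_)
    exact mul_le_mul_left (mPow_one_mSup_le_succ M n i k) _

theorem iterate_vSup_vOdot (M : Matrix (Fin d) (Fin d) NNReal) (v x : Fin d → NNReal) (n : ℕ) :
    (fun y => vSup (vOdot y M) v)^[n + 1] x =
      vSup (vOdot x (mPow M (n + 1))) (vOdot v (mPow (mSup 1 M) n)) := by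
  induction n with
  | zero => rw [iterate_one, mPow_one, mPow, vOdot_one]
  | succ n ih =>
    rw [iterate_succ_apply', ih, vOdot_vSup, vOdot_vOdot, vOdot_vOdot, vSup_assoc,
      mPow_one_mSup_succ, vOdot_mSup, vOdot_one, vSup_comm v]
    rfl

theorem noisy_sem_unique_solution_general (d : ℕ) (C : Matrix (Fin d) (Fin d) NNReal)
    (Z ε : Fin d → NNReal) (hnilp : mPow C d = 0) :
    vOdot (vSup (vOdot (vOdot Z (mOdot (Matrix.diagonal ε)
        (mPow (mSup 1 (mOdot C (Matrix.diagonal ε))) (d - 1)))) C) Z) (Matrix.diagonal ε)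
      = vOdot Z (mOdot (Matrix.diagonal ε)
        (mPow (mSup 1 (mOdot C (Matrix.diagonal ε))) (d - 1))) ∧
    ∀ U : Fin d → NNReal,
      vOdot (vSup (vOdot U C) Z) (Matrix.diagonal ε) = U →
      U = vOdot Z (mOdot (Matrix.diagonal ε)
        (mPow (mSup 1 (mOdot C (Matrix.diagonal ε))) (d - 1))) := by
  obtain _ | n := d
  · exact ⟨Subsingleton.elim _ _, fun _ _ => Subsingleton.elim _ _⟩
  set M := mOdot C (Matrix.diagonal ε)
  set W := vOdot Z (mOdot (Matrix.diagonal ε) (mPow (mSup 1 M) n))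
  have hconst :
      ∀ U, (fun U => vOdot (vSup (vOdot U C) Z) (Matrix.diagonal ε))^[n + 1] U = W := by
    intro U
    simp only [vOdot_vSup, vOdot_vOdot]
    rw [iterate_vSup_vOdot, mPow_mOdot_diagonal_eq_zero hnilp, vOdot_zero, zero_vSup, vOdot_vOdot]
  rw [Nat.add_sub_cancel]
  exact ⟨(isFixedPt_iff_eq_of_iterate_eq_const hconst W).2 rfl,
    fun U => (isFixedPt_iff_eq_of_iterate_eq_const hconst U).1⟩

/-- the noisy SEM `U = (U ⊙ C ∨ Z) ⊙ E_d` has the unique solution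
`U = Z ⊙ B̄` with `B̄ = E_d ⊙ (I_d ∨ C̄)^{⊙(d-1)}`, `C̄ = C ⊙ E_d`,
`E_d = diag(ε_1,…,ε_d)`, `ε_i ≥ 1`. -/
theorem noisy_sem_unique_solution (d : ℕ) (C : Matrix (Fin d) (Fin d) NNReal)
    (Z ε : Fin d → NNReal) (hZ : ∀ i, 0 < Z i) (hε : ∀ i, 1 ≤ ε i)
    (hnilp : mPow C d = 0) :
    vOdot (vSup (vOdot (vOdot Z (mOdot (Matrix.diagonal ε)
        (mPow (mSup 1 (mOdot C (Matrix.diagonal ε))) (d - 1)))) C) Z) (Matrix.diagonal ε)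
      = vOdot Z (mOdot (Matrix.diagonal ε)
        (mPow (mSup 1 (mOdot C (Matrix.diagonal ε))) (d - 1))) ∧
    ∀ U : Fin d → NNReal,
      vOdot (vSup (vOdot U C) Z) (Matrix.diagonal ε) = U →
      U = vOdot Z (mOdot (Matrix.diagonal ε)
        (mPow (mSup 1 (mOdot C (Matrix.diagonal ε))) (d - 1))) :=
  noisy_sem_unique_solution_general d C Z ε hnilp
end

section
/- In the recursive max-linear model with propagating noise, for a node k ∈ de(j) ∩ an(i), there exists a path p from j to i passing through k with d̄_{ji}(p) = b̄_{ji} if and only if b̄_{ji} = b̄_{jk} b̄_{ki} / b̄_{kk}. -/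
open Matrix Finset MeasureTheory ProbabilityTheory Filter

/-!
Acyclicity leaves only finitely many walks between two nodes, so `b̄_{ji}` is a maximum attained
by some walk. Concatenating a walk `j → k` with a walk `k → i` counts the noise `ε_k` twice, so
`d̄(p ++ q) ε_k = d̄(p) d̄(q)`. Hence `b̄_{jk} b̄_{ki} ≤ b̄_{ji} ε_k` always (concatenate two maximal
walks), and the reverse inequality holds exactly when some maximal walk `j → i` passes through `k`.
-/

section RandomPathWeights

variable {d : ℕ} {C : Matrix (Fin d) (Fin d) NNReal} {ε : Fin d → NNReal}

lemma IsWalk.append {j k i : Fin d} {l₁ l₂ : List (Fin d)}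
    (h₁ : IsWalk C j k l₁) (h₂ : IsWalk C k i l₂) : IsWalk C j i (l₁ ++ l₂) := by
  induction l₁ generalizing j with
  | nil => cases h₁; exact h₂
  | cons a t ih => exact ⟨h₁.1, ih h₁.2⟩

lemma IsWalk.reach_of_mem {x y k : Fin d} {l : List (Fin d)} (h : IsWalk C x y l)
    (hk : k ∈ l) : Reach C x k := by
  induction l generalizing x with
  | nil => cases hk
  | cons a t ih =>
    rcases List.mem_cons.1 hk with rfl | hk
    · exact ⟨[k], List.cons_ne_nil _ _, h.1, rfl⟩
    · obtain ⟨s, -, hs⟩ := ih h.2 hk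
      exact ⟨a :: s, List.cons_ne_nil _ _, h.1, hs⟩

lemma noisyWeight_append {j k : Fin d} {l₁ : List (Fin d)} (h₁ : IsWalk C j k l₁)
    (l₂ : List (Fin d)) :
    noisyWeight C ε j (l₁ ++ l₂) = noisyWeight C ε j l₁ * noisyWeight C ε k l₂ := by
  induction l₁ generalizing j with
  | nil => cases h₁; simp [noisyWeight]
  | cons a t ih =>
    simp only [List.cons_append, noisyWeight, ih h₁.2, mul_assoc]

namespace Acyclic

variable (hacyc : Acyclic C)
include hacyc

lemma not_reach_self (a : Fin d) : ¬ Reach C a a :=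
  fun ⟨s, hs, hw⟩ => hs (hacyc a s hw)

lemma nodup_of_isWalk {x y : Fin d} {l : List (Fin d)} (h : IsWalk C x y l) : l.Nodup := by
  induction l generalizing x with
  | nil => exact List.nodup_nil
  | cons a t ih =>
    exact List.nodup_cons.2 ⟨fun ha => hacyc.not_reach_self a (h.2.reach_of_mem ha), ih h.2⟩

lemma finite_setOf_isWalk (j i : Fin d) : {l : List (Fin d) | IsWalk C j i l}.Finite :=
  (List.finite_length_le (Fin d) d).subset fun l hl => by
    simpa using (hacyc.nodup_of_isWalk hl).length_le_card

lemma finite_walk_weights (j i : Fin d) :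
    {w | ∃ l, IsWalk C j i l ∧ w = ε j * noisyWeight C ε j l}.Finite :=
  ((hacyc.finite_setOf_isWalk j i).image fun l => ε j * noisyWeight C ε j l).subset <| by
    rintro _ ⟨l, hl, rfl⟩; exact ⟨l, hl, rfl⟩

lemma le_barB {j i : Fin d} {l : List (Fin d)} (h : IsWalk C j i l) :
    ε j * noisyWeight C ε j l ≤ barB C ε j i :=
  le_csSup (hacyc.finite_walk_weights j i).bddAbove ⟨l, h, rfl⟩

lemma exists_barB_eq {j i : Fin d} {l₀ : List (Fin d)} (h₀ : IsWalk C j i l₀) :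
    ∃ l, IsWalk C j i l ∧ barB C ε j i = ε j * noisyWeight C ε j l :=
  Set.Nonempty.csSup_mem (s := {w | ∃ l, IsWalk C j i l ∧ w = ε j * noisyWeight C ε j l})
    ⟨_, l₀, h₀, rfl⟩ (hacyc.finite_walk_weights j i)

lemma barB_self (k : Fin d) : barB C ε k k = ε k := by
  have : {w | ∃ l, IsWalk C k k l ∧ w = ε k * noisyWeight C ε k l} = {ε k} := by
    ext w
    constructor
    · rintro ⟨l, hl, rfl⟩
      obtain rfl := hacyc k l hl
      simp [noisyWeight]
    · rintro rfl
      exact ⟨[], rfl, by simp [noisyWeight]⟩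
  rw [barB, this, csSup_singleton]

end Acyclic

lemma mul_noisyWeight_append_mul {j k : Fin d} {l₁ : List (Fin d)} (h₁ : IsWalk C j k l₁)
    (l₂ : List (Fin d)) :
    ε j * noisyWeight C ε j (l₁ ++ l₂) * ε k
      = ε j * noisyWeight C ε j l₁ * (ε k * noisyWeight C ε k l₂) := by
  rw [noisyWeight_append h₁]; ring

lemma Acyclic.barB_mul_barB_le (hacyc : Acyclic C) {j k i : Fin d} {l₁ l₂ : List (Fin d)}
    (h₁ : IsWalk C j k l₁) (h₂ : IsWalk C k i l₂) :
    barB C ε j k * barB C ε k i ≤ barB C ε j i * ε k := by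
  obtain ⟨p, hp, hpe⟩ := hacyc.exists_barB_eq (ε := ε) h₁
  obtain ⟨q, hq, hqe⟩ := hacyc.exists_barB_eq (ε := ε) h₂
  rw [hpe, hqe, ← mul_noisyWeight_append_mul hp]
  exact mul_le_mul_left (hacyc.le_barB (hp.append hq)) _

end RandomPathWeights

/-- for `k ∈ de(j) ∩ an(i)`, a random critical path from `j` to `i`
passes through `k` if and only if `b̄_{ji} = b̄_{jk} b̄_{ki} / b̄_{kk}`. -/
theorem critical_through_iff (d : ℕ) (C : Matrix (Fin d) (Fin d) NNReal) (ε : Fin d → NNReal)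
    (hacyc : Acyclic C) (hε : ∀ k, 1 ≤ ε k) (j i k : Fin d)
    (hjk : Reach C j k) (hki : Reach C k i) :
    (∃ l₁ l₂ : List (Fin d), IsWalk C j k l₁ ∧ IsWalk C k i l₂ ∧
        ε j * noisyWeight C ε j (l₁ ++ l₂) = barB C ε j i) ↔
      barB C ε j i = barB C ε j k * barB C ε k i / barB C ε k k := by
  have hεk : ε k ≠ 0 := (zero_lt_one.trans_le (hε k)).ne'
  obtain ⟨l₁, -, hl₁⟩ := hjk
  obtain ⟨l₂, -, hl₂⟩ := hki
  rw [hacyc.barB_self, eq_div_iff hεk]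
  constructor
  · rintro ⟨p, q, hp, hq, hcrit⟩
    refine le_antisymm ?_ (hacyc.barB_mul_barB_le hl₁ hl₂)
    rw [← hcrit, mul_noisyWeight_append_mul hp]
    exact mul_le_mul' (hacyc.le_barB hp) (hacyc.le_barB hq)
  · intro h
    obtain ⟨p, hp, hpe⟩ := hacyc.exists_barB_eq (ε := ε) hl₁
    obtain ⟨q, hq, hqe⟩ := hacyc.exists_barB_eq (ε := ε) hl₂
    refine ⟨p, q, hp, hq, mul_right_cancel₀ hεk ?_⟩
    rw [mul_noisyWeight_append_mul hp, ← hpe, ← hqe, h]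
end

section
/- Let U be a recursive max-linear vector with propagating noise on a DAG D. Then for every node i and every j ∈ An(i), U_i / U_j ≥ b̄_{ji} / b̄_{jj} ≥ b_{ji}, where b_{ji} is the non-noisy max-linear coefficient (the maximal deterministic path weight from j to i). -/
open Matrix Finset MeasureTheory ProbabilityTheory Filter

/-! Along a walk from `j` to `i`, the recursion multiplies `U` by at least `c ε` per edge, so
`U_j · d̄_{ji}(p) ≤ ε_j · U_i` for every path `p`. Taking suprema gives `b̄_{ji} ≤ ε_j · U_i / U_j`;
for `i = j` this pins down `b̄_{jj} = ε_j`, and `ε ≥ 1` gives `b_{ji} ≤ b̄_{ji} / ε_j`. -/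

def noisyPathWeights {d : ℕ} (C : Matrix (Fin d) (Fin d) NNReal) (ε : Fin d → NNReal)
    (j i : Fin d) : Set NNReal :=
  {w | ∃ l, IsWalk C j i l ∧ w = ε j * noisyWeight C ε j l}

section

variable {d : ℕ} {C : Matrix (Fin d) (Fin d) NNReal} {Z ε U : Fin d → NNReal}

theorem walkWeight_le_noisyWeight (hε : ∀ k, 1 ≤ ε k) :
    ∀ (j : Fin d) (l : List (Fin d)), walkWeight C j l ≤ noisyWeight C ε j l
  | _, [] => le_rfl
  | j, k :: l => by
    calc C j k * walkWeight C k l ≤ C j k * (ε k * noisyWeight C ε k l) :=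
          mul_le_mul_right (le_mul_of_one_le_of_le (hε k) (walkWeight_le_noisyWeight hε k l)) _
      _ = C j k * ε k * noisyWeight C ε k l := (mul_assoc _ _ _).symm

theorem mul_noisyWeight_le_of_isWalk (hU : ∀ k i, C k i * U k * ε i ≤ U i) :
    ∀ (j i : Fin d) (l : List (Fin d)), IsWalk C j i l → U j * noisyWeight C ε j l ≤ U i
  | j, _, [], rfl => (mul_one _).le
  | j, i, k :: l, ⟨_, hl⟩ => by
    calc U j * (C j k * ε k * noisyWeight C ε k l)
        = C j k * U j * ε k * noisyWeight C ε k l := by ring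
      _ ≤ U k * noisyWeight C ε k l := mul_le_mul_left (hU j k) _
      _ ≤ U i := mul_noisyWeight_le_of_isWalk hU k i l hl

theorem mul_div_mem_upperBounds_noisyPathWeights (hU : ∀ k i, C k i * U k * ε i ≤ U i)
    {j : Fin d} (hUj : 0 < U j) (i : Fin d) :
    ε j * (U i / U j) ∈ upperBounds (noisyPathWeights C ε j i) := by
  rintro _ ⟨l, hl, rfl⟩
  exact mul_le_mul_right ((le_div_iff₀' hUj).2 (mul_noisyWeight_le_of_isWalk hU j i l hl)) _

theorem barB_le_mul_div (hU : ∀ k i, C k i * U k * ε i ≤ U i) {j : Fin d} (hUj : 0 < U j)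
    (i : Fin d) : barB C ε j i ≤ ε j * (U i / U j) :=
  csSup_le' (mul_div_mem_upperBounds_noisyPathWeights hU hUj i)

theorem barB_self (hU : ∀ k i, C k i * U k * ε i ≤ U i) {j : Fin d} (hUj : 0 < U j) :
    barB C ε j j = ε j := by
  refine le_antisymm ?_ (le_csSup ⟨_, mul_div_mem_upperBounds_noisyPathWeights hU hUj j⟩
    ⟨[], rfl, (mul_one _).symm⟩)
  simpa [div_self hUj.ne'] using barB_le_mul_div hU hUj j

theorem detB_le_barB_div (hε : ∀ k, 1 ≤ ε k) (hU : ∀ k i, C k i * U k * ε i ≤ U i)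
    {j : Fin d} (hUj : 0 < U j) (i : Fin d) : detB C j i ≤ barB C ε j i / ε j := by
  refine csSup_le' ?_
  rintro _ ⟨l, hl, rfl⟩
  rw [le_div_iff₀' ((zero_lt_one).trans_le (hε j))]
  calc ε j * walkWeight C j l ≤ ε j * noisyWeight C ε j l :=
        mul_le_mul_right (walkWeight_le_noisyWeight hε j l) _
    _ ≤ barB C ε j i :=
        le_csSup ⟨_, mul_div_mem_upperBounds_noisyPathWeights hU hUj i⟩ ⟨l, hl, rfl⟩

theorem le_of_eq_recursion
    (hU : ∀ i, U i = ((Finset.univ.sup fun k => C k i * U k) ⊔ Z i) * ε i) (k i : Fin d) :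
    C k i * U k * ε i ≤ U i :=
  (hU i).symm ▸ mul_le_mul_left
    (le_sup_of_le_left (Finset.le_sup (f := fun k => C k i * U k) (Finset.mem_univ k))) _

theorem pos_of_eq_recursion (hZ : ∀ k, 0 < Z k) (hε : ∀ k, 1 ≤ ε k)
    (hU : ∀ i, U i = ((Finset.univ.sup fun k => C k i * U k) ⊔ Z i) * ε i) (j : Fin d) :
    0 < U j :=
  (hU j).symm ▸ mul_pos ((hZ j).trans_le le_sup_right) ((zero_lt_one).trans_le (hε j))

end

theorem ratio_lower_bounds_general (d : ℕ) (C : Matrix (Fin d) (Fin d) NNReal)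
    (Z ε U : Fin d → NNReal) (hZ : ∀ k, 0 < Z k) (hε : ∀ k, 1 ≤ ε k)
    (hU : ∀ i, U i = ((Finset.univ.sup fun k => C k i * U k) ⊔ Z i) * ε i)
    (j i : Fin d) :
    detB C j i ≤ barB C ε j i / barB C ε j j ∧
    barB C ε j i / barB C ε j j ≤ U i / U j := by
  have hle := le_of_eq_recursion hU
  have hUj := pos_of_eq_recursion hZ hε hU j
  rw [barB_self hle hUj]
  exact ⟨detB_le_barB_div hε hle hUj i,
    (div_le_iff₀' ((zero_lt_one).trans_le (hε j))).2 (barB_le_mul_div hle hUj i)⟩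

/-- for a recursive ML vector with propagating noise and `j ∈ An(i)`,
`U_i / U_j ≥ b̄_{ji} / b̄_{jj} ≥ b_{ji}` (note `b̄_{jj} = ε_j`). -/
theorem ratio_lower_bounds (d : ℕ) (C : Matrix (Fin d) (Fin d) NNReal)
    (Z ε U : Fin d → NNReal) (hacyc : Acyclic C) (hZ : ∀ k, 0 < Z k) (hε : ∀ k, 1 ≤ ε k)
    (hU : ∀ i, U i = ((Finset.univ.sup fun k => C k i * U k) ⊔ Z i) * ε i)
    (j i : Fin d) (hAn : j = i ∨ Reach C j i) :
    detB C j i ≤ barB C ε j i / barB C ε j j ∧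
    barB C ε j i / barB C ε j j ≤ U i / U j :=
  ratio_lower_bounds_general d C Z ε U hZ hε hU j i
end

section
/- Let X, Y ≥ 1 be independent random variables such that ln X is regularly varying at zero with exponent α₁ and ln Y is regularly varying at zero with exponent α₂. Then XY − 1 is regularly varying at zero with exponent α₁ + α₂. -/
/-!
Put `A = log X`, `B = log Y`. Then `{XY - 1 ≤ t} = {A + B ≤ log (1 + t)}` with `log (1 + t) ~ t`,
and a monotone regularly varying function absorbs such an asymptotically linear change of
variable; so it suffices that the distribution function `H` of `A + B` is regularly varying at
zero with index `α₁ + α₂`. Cutting `{A + B ≤ t}` into the boxes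
`{t i / n < A ≤ t (i + 1) / n, B ≤ t (1 - (i + k) / n)}`, independence squeezes
`H t / (F t G t)` (with `F`, `G` the distribution functions of `A`, `B`) between Riemann–Stieltjes
sums, which by regular variation of `F` and `G` converge as `t ↓ 0` to the sums of
`∫₀¹ (1 - s) ^ α₂ d(s ^ α₁)`. As the mesh `1 / n` goes to zero the upper and lower sums merge, so
`H t / (F t G t)` has a positive limit and `H` varies regularly like `F G`.
-/

open MeasureTheory ProbabilityTheory Filter

noncomputable section

/-- A random variable `X` is regularly varying at zero with exponent `α`:
`lim_{t↓0} P(X ≤ tx)/P(X ≤ t) = x^α` for all `x > 0`. -/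
def RegVarZero {Ω : Type*} [MeasurableSpace Ω] (μ : Measure Ω) (X : Ω → ℝ) (α : ℝ) : Prop :=
  ∀ x : ℝ, 0 < x →
    Tendsto (fun t : ℝ => (μ {ω | X ω ≤ t * x}).toReal / (μ {ω | X ω ≤ t}).toReal)
      (nhdsWithin 0 (Set.Ioi 0)) (nhds (x ^ α))

end

open Set Topology

def RegVarAtZero (F : ℝ → ℝ) (α : ℝ) : Prop :=
  ∀ x : ℝ, 0 < x → Tendsto (fun t => F (t * x) / F t) (𝓝[>] 0) (𝓝 (x ^ α))

theorem regVarZero_iff {Ω : Type*} [MeasurableSpace Ω] (μ : Measure Ω) (X : Ω → ℝ) (α : ℝ) :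
    RegVarZero μ X α ↔ RegVarAtZero (fun t => μ.real {ω | X ω ≤ t}) α :=
  Iff.rfl

theorem tendsto_mul_const_nhdsGT_zero {c : ℝ} (hc : 0 < c) :
    Tendsto (· * c) (𝓝[>] (0 : ℝ)) (𝓝[>] 0) := by
  simpa only [mul_comm _ c] using tendsto_iff_comap.2 (comap_mulLeft_nhdsGT_zero hc).ge

theorem exists_tendsto_of_forall_eventually_mem_Icc {ι : Type*} {l : Filter ι} [l.NeBot]
    {R : ι → ℝ} (h : ∀ ε > 0, ∃ a, ∀ᶠ i in l, R i ∈ Icc a (a + ε)) :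
    ∃ L, Tendsto R l (𝓝 L) := by
  refine cauchy_map_iff_exists_tendsto.1 (Metric.cauchy_iff.2 ⟨inferInstance, fun ε hε => ?_⟩)
  obtain ⟨a, ha⟩ := h (ε / 2) (half_pos hε)
  refine ⟨Icc a (a + ε / 2), ha, fun x hx y hy => ?_⟩
  rw [Real.dist_eq, abs_lt]
  constructor <;> linarith [hx.1, hx.2, hy.1, hy.2]

namespace RegVarAtZero

variable {F G H : ℝ → ℝ} {α β : ℝ}

theorem congr (hF : RegVarAtZero F α) (h : ∀ t, 0 < t → F t = G t) : RegVarAtZero G α :=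
  fun x hx => (hF x hx).congr' (eventually_mem_nhdsWithin.mono fun t ht => by
    rw [h t ht, h _ (mul_pos ht hx)])

theorem pos (hF : RegVarAtZero F α) (hmono : Monotone F) (hnn : ∀ t, 0 ≤ F t) {t₀ : ℝ}
    (ht₀ : 0 < t₀) : 0 < F t₀ := by
  refine (hnn t₀).lt_of_ne fun h₀ => (Real.rpow_pos_of_pos two_pos α).ne
    (tendsto_nhds_unique (tendsto_const_nhds.congr' ?_) (hF 2 two_pos))
  -- `F` vanishes on `(0, t₀]`, so the ratios `F (2t) / F t` are eventually `0 / 0 = 0`.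
  filter_upwards [Ioc_mem_nhdsGT (half_pos ht₀)] with t ht
  have : F (t * 2) = 0 := le_antisymm (h₀ ▸ hmono (by linarith [ht.2])) (hnn _)
  rw [this, zero_div]

theorem map_zero (hF : RegVarAtZero F α) (hα : 0 < α) (hmono : Monotone F)
    (hnn : ∀ t, 0 ≤ F t) : F 0 = 0 := by
  obtain ⟨L, hL⟩ : ∃ L, Tendsto F (𝓝[>] 0) (𝓝 L) := ⟨_, hmono.tendsto_nhdsGT 0⟩
  -- a positive limit `L` would force `F (2t) / F t → L / L = 1 ≠ 2 ^ α`
  have hL0 : L = 0 := by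
    by_contra hne
    have h := tendsto_nhds_unique (hF 2 two_pos)
      ((hL.comp (tendsto_mul_const_nhdsGT_zero two_pos)).div hL hne)
    rw [div_self hne] at h
    exact (Real.one_lt_rpow one_lt_two hα).ne' h
  refine le_antisymm ((ge_of_tendsto hL ?_).trans_eq hL0) (hnn 0)
  filter_upwards [self_mem_nhdsWithin] with t ht using hmono (le_of_lt ht)

theorem tendsto_of_nonneg (hF : RegVarAtZero F α) (hα : 0 < α) (hF0 : F 0 = 0) {x : ℝ}
    (hx : 0 ≤ x) : Tendsto (fun t => F (t * x) / F t) (𝓝[>] 0) (𝓝 (x ^ α)) := by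
  rcases hx.lt_or_eq with hx | rfl
  · exact hF x hx
  · simp [hF0, Real.zero_rpow hα.ne']

theorem mul (hF : RegVarAtZero F α) (hG : RegVarAtZero G β) :
    RegVarAtZero (fun t => F t * G t) (α + β) := fun x hx => by
  simpa only [mul_div_mul_comm, Real.rpow_add hx] using (hF x hx).mul (hG x hx)

theorem of_tendsto_div (hG : RegVarAtZero G α) (hG0 : ∀ t, 0 < t → G t ≠ 0) {L : ℝ}
    (hL : Tendsto (fun t => H t / G t) (𝓝[>] 0) (𝓝 L)) (hL0 : L ≠ 0) :
    RegVarAtZero H α := fun x hx => by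
  have h := ((hL.comp (tendsto_mul_const_nhdsGT_zero hx)).div hL hL0).mul (hG x hx)
  rw [div_self hL0, one_mul] at h
  refine h.congr' (eventually_mem_nhdsWithin.mono fun t ht => ?_)
  have h₁ := hG0 t ht
  have h₂ := hG0 _ (mul_pos ht hx)
  rcases eq_or_ne (H t) 0 with h₃ | h₃
  · simp [h₃]
  · simp only [Function.comp_apply, Pi.div_apply]
    field_simp

theorem eventually_div_le_div_comp (hmono : Monotone H) (hpos : ∀ t, 0 < t → 0 < H t)
    {φ : ℝ → ℝ} (hφ : ∀ t, 0 < t → φ t ≤ t) {ρ : ℝ} (hρ : 0 < ρ)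
    (hρφ : ∀ᶠ t in 𝓝[>] 0, ρ * t ≤ φ t) {x : ℝ} (hx : 0 < x) :
    ∀ᶠ t in 𝓝[>] 0, H (t * (ρ * x)) / H t ≤ H (φ (t * x)) / H (φ t) ∧
      H (φ (t * x)) / H (φ t) ≤ H (t * x) / H (t * ρ) := by
  filter_upwards [hρφ, (tendsto_mul_const_nhdsGT_zero hx).eventually hρφ, self_mem_nhdsWithin]
    with t h₁ h₂ (ht : 0 < t)
  have htx : 0 < t * x := mul_pos ht hx
  have hφt : 0 < H (φ t) := hpos _ (by nlinarith)
  constructor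
  · refine div_le_div₀ (hpos _ (by nlinarith)).le (hmono ?_) hφt (hmono (hφ t ht))
    linarith
  · refine div_le_div₀ (hpos _ htx).le (hmono (hφ _ htx)) (hpos _ (by positivity)) (hmono ?_)
    linarith

theorem comp_of_le (hH : RegVarAtZero H β) (hmono : Monotone H) (hnn : ∀ t, 0 ≤ H t)
    {φ : ℝ → ℝ} (hφ : ∀ t, 0 < t → φ t ≤ t) (hφ' : ∀ ρ < 1, ∀ᶠ t in 𝓝[>] 0, ρ * t ≤ φ t) :
    RegVarAtZero (fun t => H (φ t)) β := by
  intro x hx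
  have hpos : ∀ t, 0 < t → 0 < H t := fun t ht => hH.pos hmono hnn ht
  have hcont₁ : Tendsto (fun ρ => (ρ * x) ^ β) (𝓝[<] 1) (𝓝 (x ^ β)) := by
    have : ContinuousAt (fun ρ => (ρ * x) ^ β) 1 :=
      ContinuousAt.rpow_const (by fun_prop) (Or.inl (by simp [hx.ne']))
    simpa using this.tendsto.mono_left nhdsWithin_le_nhds
  have hcont₂ : Tendsto (fun ρ => (x / ρ) ^ β) (𝓝[<] 1) (𝓝 (x ^ β)) := by
    have : ContinuousAt (fun ρ => (x / ρ) ^ β) 1 :=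
      ContinuousAt.rpow_const (by fun_prop (disch := norm_num)) (Or.inl (by simp [hx.ne']))
    simpa using this.tendsto.mono_left nhdsWithin_le_nhds
  rw [tendsto_order]
  constructor
  · intro a ha
    obtain ⟨ρ, hρa, hρ⟩ := ((hcont₁.eventually (lt_mem_nhds ha)).and
      (Ioo_mem_nhdsLT one_pos)).exists
    have hlim : Tendsto (fun t => H (t * (ρ * x)) / H t) (𝓝[>] 0) (𝓝 ((ρ * x) ^ β)) :=
      hH _ (mul_pos hρ.1 hx)
    filter_upwards [hlim.eventually (lt_mem_nhds hρa),
      eventually_div_le_div_comp hmono hpos hφ hρ.1 (hφ' ρ hρ.2) hx] with t h₁ h₂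
    exact h₁.trans_le h₂.1
  · intro b hb
    obtain ⟨ρ, hρb, hρ⟩ := ((hcont₂.eventually (gt_mem_nhds hb)).and
      (Ioo_mem_nhdsLT one_pos)).exists
    have hlim : Tendsto (fun t => H (t * x) / H (t * ρ)) (𝓝[>] 0) (𝓝 ((x / ρ) ^ β)) := by
      refine ((hH _ (div_pos hx hρ.1)).comp (tendsto_mul_const_nhdsGT_zero hρ.1)).congr fun t => ?_
      simp only [Function.comp_apply, mul_assoc, mul_div_cancel₀ _ hρ.1.ne']
    filter_upwards [hlim.eventually (gt_mem_nhds hρb),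
      eventually_div_le_div_comp hmono hpos hφ hρ.1 (hφ' ρ hρ.2) hx] with t h₁ h₂
    exact h₂.2.trans_lt h₁

end RegVarAtZero

theorem eventually_mul_le_log_one_add {ρ : ℝ} (hρ : ρ < 1) :
    ∀ᶠ t in 𝓝[>] 0, ρ * t ≤ Real.log (1 + t) := by
  filter_upwards [Ioo_mem_nhdsGT (show (0 : ℝ) < 2 * (1 - ρ) by linarith)] with t ht
  refine le_trans ?_ (Real.le_log_one_add_of_nonneg ht.1.le)
  have : ρ * (t + 2) ≤ 2 := by rcases le_or_gt 0 ρ with h | h <;> nlinarith [ht.1, ht.2]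
  rw [le_div_iff₀ (by linarith [ht.1])]
  nlinarith [ht.1]

/-- Riemann–Stieltjes sum for `∫₀¹ g (1 - s) df(s)` over the uniform partition of `[0, 1]` into
`n` pieces, with `g` sampled `k` partition steps to the right: for monotone `f` and `g`, `k = 0`
gives an upper and `k = 1` a lower sum. -/
noncomputable def stieltjesSum (f g : ℝ → ℝ) (n k : ℕ) : ℝ :=
  ∑ i ∈ Finset.range n, (f (((i + 1 : ℕ) : ℝ) / n) - f (i / n)) * g (1 - ((i + k : ℕ) : ℝ) / n)

theorem stieltjesSum_div_div (f g : ℝ → ℝ) (a b : ℝ) (n k : ℕ) :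
    stieltjesSum (fun s => f s / a) (fun s => g s / b) n k = stieltjesSum f g n k / (a * b) := by
  simp only [stieltjesSum, Finset.sum_div]
  exact Finset.sum_congr rfl fun i _ => by ring

theorem tendsto_stieltjesSum {ι : Type*} {l : Filter ι} {f g : ι → ℝ → ℝ} {f₀ g₀ : ℝ → ℝ}
    (hf : ∀ s, 0 ≤ s → Tendsto (fun i => f i s) l (𝓝 (f₀ s)))
    (hg : ∀ s, 0 ≤ s → Tendsto (fun i => g i s) l (𝓝 (g₀ s))) (n : ℕ) {k : ℕ} (hk : k ≤ 1) :
    Tendsto (fun i => stieltjesSum (f i) (g i) n k) l (𝓝 (stieltjesSum f₀ g₀ n k)) := by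
  refine tendsto_finsetSum _ fun i hi => ((hf _ (by positivity)).sub (hf _ (by positivity))).mul
    (hg _ (sub_nonneg.2 (div_le_one_of_le₀ ?_ n.cast_nonneg)))
  have := Finset.mem_range.1 hi
  exact_mod_cast (by omega : i + k ≤ n)

theorem exists_stieltjesSum_sub_le {f g : ℝ → ℝ} (hf : MonotoneOn f (Icc 0 1))
    (hg : UniformContinuousOn g (Icc 0 1)) {κ : ℝ} (hκ : 0 < κ) :
    ∃ n > 0, stieltjesSum f g n 0 - stieltjesSum f g n 1 ≤ (f 1 - f 0) * κ := by
  obtain ⟨δ, hδ, hgδ⟩ := Metric.uniformContinuousOn_iff.1 hg κ hκ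
  obtain ⟨m, hm⟩ := exists_nat_one_div_lt hδ
  set n := m + 1
  have hn : (0 : ℝ) < n := by positivity
  have mem : ∀ j : ℕ, j ≤ n → (j : ℝ) / n ∈ Icc (0 : ℝ) 1 := fun j hj =>
    unitInterval.div_mem j.cast_nonneg hn.le (by exact_mod_cast hj)
  refine ⟨n, m.succ_pos, ?_⟩
  calc stieltjesSum f g n 0 - stieltjesSum f g n 1
      = ∑ i ∈ Finset.range n, (f (((i + 1 : ℕ) : ℝ) / n) - f (i / n)) *
          (g (1 - i / n) - g (1 - ((i + 1 : ℕ) : ℝ) / n)) := by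
        simp only [stieltjesSum, ← Finset.sum_sub_distrib, mul_sub, add_zero]
    _ ≤ ∑ i ∈ Finset.range n, (f (((i + 1 : ℕ) : ℝ) / n) - f (i / n)) * κ := by
        refine Finset.sum_le_sum fun i hi => ?_
        have hi : i < n := Finset.mem_range.1 hi
        have h₁ := mem i hi.le
        have h₂ := mem (i + 1) hi
        refine mul_le_mul_of_nonneg_left ?_ (sub_nonneg.2 (hf h₁ h₂ ?_))
        · refine (le_abs_self _).trans (hgδ _ (Icc.mem_iff_one_sub_mem.1 h₁) _
            (Icc.mem_iff_one_sub_mem.1 h₂) ?_).le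
          rw [Real.dist_eq, show 1 - (i : ℝ) / n - (1 - ((i + 1 : ℕ) : ℝ) / n) = 1 / n by
            push_cast; ring, abs_of_pos (by positivity)]
          simpa [n] using hm
        · gcongr
          exact_mod_cast i.le_succ
    _ = (f 1 - f 0) * κ := by
        rw [← Finset.sum_mul, Finset.sum_range_sub (fun i : ℕ => f (i / n)), div_self hn.ne']
        simp

theorem stieltjesSum_rpow_two_one_pos {α β : ℝ} (hα : 0 < α) (hβ : 0 < β) :
    0 < stieltjesSum (· ^ α) (· ^ β) 2 1 := by
  norm_num [stieltjesSum, Finset.sum_range_succ, Real.zero_rpow hα.ne', Real.zero_rpow hβ.ne']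
  positivity

namespace RegVarAtZero

variable {F G H : ℝ → ℝ} {α β : ℝ}

theorem exists_tendsto_div_of_stieltjesSum_bounds (hF : RegVarAtZero F α) (hG : RegVarAtZero G β)
    (hα : 0 < α) (hβ : 0 < β) (hFmono : Monotone F) (hGmono : Monotone G)
    (hFnn : ∀ t, 0 ≤ F t) (hGnn : ∀ t, 0 ≤ G t)
    (hup : ∀ t, 0 < t → ∀ n, 0 < n →
      H t ≤ stieltjesSum (fun s => F (t * s)) (fun s => G (t * s)) n 0)
    (hlow : ∀ t, 0 < t → ∀ n, stieltjesSum (fun s => F (t * s)) (fun s => G (t * s)) n 1 ≤ H t) :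
    ∃ L > 0, Tendsto (fun t => H t / (F t * G t)) (𝓝[>] 0) (𝓝 L) := by
  set R := fun t => H t / (F t * G t)
  set S := fun n k t => stieltjesSum (fun s => F (t * s) / F t) (fun s => G (t * s) / G t) n k
  have hS : ∀ n k, k ≤ 1 → Tendsto (S n k) (𝓝[>] 0) (𝓝 (stieltjesSum (· ^ α) (· ^ β) n k)) :=
    fun n k hk => tendsto_stieltjesSum
      (fun s hs => hF.tendsto_of_nonneg hα (hF.map_zero hα hFmono hFnn) hs)
      (fun s hs => hG.tendsto_of_nonneg hβ (hG.map_zero hβ hGmono hGnn) hs) n hk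
  have hFG : ∀ t, 0 < t → 0 < F t * G t := fun t ht =>
    mul_pos (hF.pos hFmono hFnn ht) (hG.pos hGmono hGnn ht)
  have hRS : ∀ t, 0 < t → ∀ n, 0 < n → S n 1 t ≤ R t ∧ R t ≤ S n 0 t := fun t ht n hn => by
    simp only [S, R, stieltjesSum_div_div]
    exact ⟨div_le_div_of_nonneg_right (hlow t ht n) (hFG t ht).le,
      div_le_div_of_nonneg_right (hup t ht n hn) (hFG t ht).le⟩
  have hrpow_mono : MonotoneOn (· ^ α) (Icc (0 : ℝ) 1) :=
    (Real.monotoneOn_rpow_Ici_of_exponent_nonneg hα.le).mono Icc_subset_Ici_self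
  have hrpow_cont : UniformContinuousOn (· ^ β) (Icc (0 : ℝ) 1) :=
    isCompact_Icc.uniformContinuousOn_of_continuous (Real.continuous_rpow_const hβ.le).continuousOn
  obtain ⟨L, hL⟩ : ∃ L, Tendsto R (𝓝[>] 0) (𝓝 L) := by
    refine exists_tendsto_of_forall_eventually_mem_Icc fun ε hε => ?_
    obtain ⟨n, hn, hgap⟩ := exists_stieltjesSum_sub_le hrpow_mono hrpow_cont (div_pos hε three_pos)
    simp only [Real.one_rpow, Real.zero_rpow hα.ne', sub_zero, one_mul] at hgap
    refine ⟨stieltjesSum (· ^ α) (· ^ β) n 1 - ε / 3, ?_⟩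
    filter_upwards [(hS n 0 zero_le_one).eventually (gt_mem_nhds (lt_add_of_pos_right _
      (div_pos hε three_pos))), (hS n 1 le_rfl).eventually (lt_mem_nhds (sub_lt_self _
      (div_pos hε three_pos))), self_mem_nhdsWithin] with t h₀ h₁ (ht : 0 < t)
    obtain ⟨hR₁, hR₀⟩ := hRS t ht n hn
    constructor <;> linarith
  refine ⟨L, (stieltjesSum_rpow_two_one_pos hα hβ).trans_le
    (le_of_tendsto_of_tendsto (hS 2 1 le_rfl) hL ?_), hL⟩
  filter_upwards [self_mem_nhdsWithin] with t ht using (hRS t ht 2 two_pos).1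

theorem of_stieltjesSum_bounds (hF : RegVarAtZero F α) (hG : RegVarAtZero G β)
    (hα : 0 < α) (hβ : 0 < β) (hFmono : Monotone F) (hGmono : Monotone G)
    (hFnn : ∀ t, 0 ≤ F t) (hGnn : ∀ t, 0 ≤ G t)
    (hup : ∀ t, 0 < t → ∀ n, 0 < n →
      H t ≤ stieltjesSum (fun s => F (t * s)) (fun s => G (t * s)) n 0)
    (hlow : ∀ t, 0 < t → ∀ n, stieltjesSum (fun s => F (t * s)) (fun s => G (t * s)) n 1 ≤ H t) :
    RegVarAtZero H (α + β) := by
  obtain ⟨L, hL0, hL⟩ := exists_tendsto_div_of_stieltjesSum_bounds hF hG hα hβ hFmono hGmono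
    hFnn hGnn hup hlow
  exact (hF.mul hG).of_tendsto_div (fun t ht =>
    (mul_pos (hF.pos hFmono hFnn ht) (hG.pos hGmono hGnn ht)).ne') hL hL0.ne'

end RegVarAtZero

section Independent

variable {Ω : Type*} [MeasurableSpace Ω] {μ : Measure Ω} [IsFiniteMeasure μ] {A B : Ω → ℝ}

theorem monotone_measureReal_le (X : Ω → ℝ) : Monotone fun t => μ.real {ω | X ω ≤ t} :=
  fun _ _ hst => measureReal_mono fun _ (h : X _ ≤ _) => h.trans hst

theorem ProbabilityTheory.IndepFun.measureReal_Ioc_inter_Iic (hA : Measurable A)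
    (hAB : IndepFun A B μ) {a a' : ℝ} (h : a ≤ a') (b : ℝ) :
    μ.real (A ⁻¹' Ioc a a' ∩ B ⁻¹' Iic b) =
      (μ.real {ω | A ω ≤ a'} - μ.real {ω | A ω ≤ a}) * μ.real {ω | B ω ≤ b} := by
  have hind := hAB.measure_inter_preimage_eq_mul (Ioc a a') (Iic b) measurableSet_Ioc
    measurableSet_Iic
  have hIoc : Ioc a a' = Iic a' \ Iic a := by ext; simp [and_comm]
  rw [measureReal_def, hind, ENNReal.toReal_mul, ← measureReal_def, ← measureReal_def, hIoc,
    preimage_sdiff, measureReal_sdiff (preimage_mono (Iic_subset_Iic.2 h))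
      (hA measurableSet_Iic)]
  rfl

theorem measureReal_add_le_le_stieltjesSum (hA : Measurable A) (hAB : IndepFun A B μ)
    (hA0 : μ {ω | A ω ≤ 0} = 0) (hB : ∀ ω, 0 ≤ B ω) {t : ℝ} (ht : 0 < t) {n : ℕ} (hn : 0 < n) :
    μ.real {ω | A ω + B ω ≤ t} ≤
      stieltjesSum (fun s => μ.real {ω | A ω ≤ t * s}) (fun s => μ.real {ω | B ω ≤ t * s}) n 0 := by
  set box := fun i : ℕ => A ⁻¹' Ioc (t * (i / n)) (t * (((i + 1 : ℕ) : ℝ) / n)) ∩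
    B ⁻¹' Iic (t * (1 - ((i + 0 : ℕ) : ℝ) / n))
  have hcover : {ω | A ω + B ω ≤ t} ⊆ {ω | A ω ≤ 0} ∪ ⋃ i ∈ Finset.range n, box i := by
    intro ω (hω : A ω + B ω ≤ t)
    refine (le_or_gt (A ω) 0).imp id fun hA₀ => ?_
    have hA : A ω ∈ Ioc (t * ((0 : ℕ) / n)) (t * ((n : ℕ) / n)) := by
      rw [Nat.cast_zero, zero_div, mul_zero, div_self (by positivity), mul_one]
      exact ⟨hA₀, by linarith [hB ω]⟩
    obtain ⟨i, hi, hAi⟩ := mem_iUnion₂.1 (Ioc_subset_biUnion_Ioc n (fun i : ℕ => t * (i / n)) hA)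
    refine mem_iUnion₂.2 ⟨i, hi, hAi, ?_⟩
    simp only [mem_preimage, mem_Iic, add_zero]
    linarith [hAi.1]
  calc μ.real {ω | A ω + B ω ≤ t}
      ≤ μ.real {ω | A ω ≤ 0} + ∑ i ∈ Finset.range n, μ.real (box i) :=
        (measureReal_mono hcover).trans ((measureReal_union_le _ _).trans
          (add_le_add le_rfl (measureReal_biUnion_finset_le _ _)))
    _ = _ := by
        rw [measureReal_def, hA0, ENNReal.toReal_zero, zero_add]
        refine Finset.sum_congr rfl fun i _ => hAB.measureReal_Ioc_inter_Iic hA ?_ _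
        gcongr
        exact_mod_cast i.le_succ

theorem stieltjesSum_le_measureReal_add_le (hA : Measurable A) (hB : Measurable B)
    (hAB : IndepFun A B μ) {t : ℝ} (ht : 0 < t) (n : ℕ) :
    stieltjesSum (fun s => μ.real {ω | A ω ≤ t * s}) (fun s => μ.real {ω | B ω ≤ t * s}) n 1 ≤
      μ.real {ω | A ω + B ω ≤ t} := by
  set a := fun i : ℕ => t * (i / n)
  set box := fun i : ℕ => A ⁻¹' Ioc (a i) (a (i + 1)) ∩ B ⁻¹' Iic (t * (1 - ((i + 1 : ℕ) : ℝ) / n))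
  have ha : Monotone a := fun i j hij => by
    simp only [a]
    gcongr
  have hdisj : (Finset.range n : Set ℕ).PairwiseDisjoint box := fun i _ j _ hij =>
    ((ha.pairwise_disjoint_on_Ioc_succ hij).preimage A).mono inter_subset_left inter_subset_left
  have hsub : ⋃ i ∈ Finset.range n, box i ⊆ {ω | A ω + B ω ≤ t} := by
    refine iUnion₂_subset fun i _ ω ⟨⟨_, hA⟩, hB⟩ => ?_
    simp only [mem_preimage, mem_Iic, a] at hA hB
    exact (show A ω + B ω ≤ t by linarith)
  calc _ = ∑ i ∈ Finset.range n, μ.real (box i) :=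
        Finset.sum_congr rfl fun i _ => (hAB.measureReal_Ioc_inter_Iic hA (ha i.le_succ) _).symm
    _ = μ.real (⋃ i ∈ Finset.range n, box i) := (measureReal_biUnion_finset hdisj fun i _ =>
        (hA measurableSet_Ioc).inter (hB measurableSet_Iic)).symm
    _ ≤ _ := measureReal_mono hsub

theorem regVarAtZero_measureReal_add_le (hA : Measurable A) (hB : Measurable B)
    (hAB : IndepFun A B μ) (hB0 : ∀ ω, 0 ≤ B ω) {α β : ℝ} (hα : 0 < α) (hβ : 0 < β)
    (hAα : RegVarZero μ A α) (hBβ : RegVarZero μ B β) :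
    RegVarAtZero (fun t => μ.real {ω | A ω + B ω ≤ t}) (α + β) := by
  rw [regVarZero_iff] at hAα hBβ
  have hnn (X : Ω → ℝ) (t : ℝ) : 0 ≤ μ.real {ω | X ω ≤ t} := measureReal_nonneg
  have hA0 : μ {ω | A ω ≤ 0} = 0 :=
    (measureReal_eq_zero_iff).1 (hAα.map_zero hα (monotone_measureReal_le A) (hnn A))
  exact hAα.of_stieltjesSum_bounds hBβ hα hβ (monotone_measureReal_le A)
    (monotone_measureReal_le B) (hnn A) (hnn B)
    (fun t ht n hn => measureReal_add_le_le_stieltjesSum hA hAB hA0 hB0 ht hn)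
    (fun t ht n => stieltjesSum_le_measureReal_add_le hA hB hAB ht n)

end Independent

/-- if `X, Y ≥ 1` are independent with `ln X ∈ RV⁰_{α₁}` and
`ln Y ∈ RV⁰_{α₂}`, then `XY − 1 ∈ RV⁰_{α₁+α₂}`. -/
theorem regVarZero_mul_sub_one {Ω : Type*} [MeasurableSpace Ω] (μ : Measure Ω)
    [IsProbabilityMeasure μ] (X Y : Ω → ℝ)
    (hXm : Measurable X) (hYm : Measurable Y)
    (hX1 : ∀ ω, 1 ≤ X ω) (hY1 : ∀ ω, 1 ≤ Y ω)
    (hindep : IndepFun X Y μ) (α₁ α₂ : ℝ) (hα₁ : 0 < α₁) (hα₂ : 0 < α₂)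
    (hX : RegVarZero μ (fun ω => Real.log (X ω)) α₁)
    (hY : RegVarZero μ (fun ω => Real.log (Y ω)) α₂) :
    RegVarZero μ (fun ω => X ω * Y ω - 1) (α₁ + α₂) := by
  set S := fun ω => Real.log (X ω) + Real.log (Y ω)
  have hS : RegVarAtZero (fun t => μ.real {ω | S ω ≤ t}) (α₁ + α₂) :=
    regVarAtZero_measureReal_add_le hXm.log hYm.log
      (hindep.comp Real.measurable_log Real.measurable_log) (fun ω => Real.log_nonneg (hY1 ω))
      hα₁ hα₂ hX hY
  have hSlog : RegVarAtZero (fun t => μ.real {ω | S ω ≤ Real.log (1 + t)}) (α₁ + α₂) :=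
    hS.comp_of_le (monotone_measureReal_le S) (fun _ => measureReal_nonneg)
      (fun t ht => by linarith [Real.log_le_sub_one_of_pos (by linarith : 0 < 1 + t)])
      fun _ => eventually_mul_le_log_one_add
  rw [regVarZero_iff]
  refine hSlog.congr fun t ht => congrArg μ.real (Set.ext fun ω => ?_)
  have hX0 : 0 < X ω := zero_lt_one.trans_le (hX1 ω)
  have hY0 : 0 < Y ω := zero_lt_one.trans_le (hY1 ω)
  simp only [S, mem_ofPred_eq, ← Real.log_mul hX0.ne' hY0.ne',
    Real.log_le_log_iff (mul_pos hX0 hY0) (by linarith : (0 : ℝ) < 1 + t)]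
  constructor <;> intro h <;> linarith
end
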